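/- Let R be a principal ideal domain with a ring automorphism σ such that for every irreducible z ∈ R and every m ≥ 1, σ^m(z) is not an associate of z. Let p, q ∈ R be nonzero, let q₀ ∈ R be irreducible with q₀ dividing q, and let n ≥ 0 with σ^n(q₀) dividing p. Assume there are no integers 0 ≤ i ≤ j ≤ n with j − i < n such that σ^i(q₀) divides q and σ^j(q₀) divides p. Then the ideal J generated by ∏_{i=0}^{n} σ^i(q₀) is a maximal (p,q)-invariant ideal: J ≠ R, J is (p,q)-invariant, and every (p,q)-invariant ideal of R strictly containing J equals R. -/

import Mathlib

/-- An ideal `I` of `R` is `(p,q)`-invariant if `σ⁻¹(i)·p ∈ I` and `σ(i)·q ∈ I`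
for every `i ∈ I`. -/
def PQInvariant {R : Type*} [CommRing R] (σ : R ≃+* R) (p q : R) (I : Ideal R) : Prop :=
  ∀ i ∈ I, σ⁻¹ i * p ∈ I ∧ σ i * q ∈ I

/-!
Write `c = z · σ(z) ⋯ σⁿ(z)` with `z = q₀`. Since `σ(c) · z = c · σⁿ⁺¹(z)`, shifting the chain shows
that `(c)` is `(p,q)`-invariant once `z ∣ q` and `σⁿ(z) ∣ p`. Conversely, let `(d) ⊋ (c)` be a proper
invariant ideal and `S` the (nonempty) set of `i ≤ n` with `σⁱ(z) ∣ d`. As the `σⁱ(z)` are pairwise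
non-associated primes, invariance of `(d)` says that a run of `S` can only stop going up at some `j`
with `σʲ(z) ∣ p`, and going down at some `i` with `σⁱ(z) ∣ q` (at the latest at `i = 0`). Minimality
forces this run to be all of `[0, n]`, hence `c ∣ d`, a contradiction.
-/

section Runs

variable {S : Set ℕ}

theorem exists_Icc_subset_of_step_down {Q : ℕ → Prop} {a : ℕ} (ha : a ∈ S) (hQ : Q 0)
    (hdown : ∀ i, i + 1 ∈ S → i ∈ S ∨ Q (i + 1)) : ∃ i ≤ a, Q i ∧ Set.Icc i a ⊆ S := by
  induction a with
  | zero => exact ⟨0, le_rfl, hQ, by simpa using ha⟩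
  | succ a ih =>
    rcases hdown a ha with ha' | hQa
    · obtain ⟨i, hia, hQi, hsub⟩ := ih ha'
      refine ⟨i, by omega, hQi, fun m hm => ?_⟩
      rcases eq_or_lt_of_le hm.2 with rfl | hlt
      · exact ha
      · exact hsub ⟨hm.1, by omega⟩
    · exact ⟨a + 1, le_rfl, hQa, by simpa using ha⟩

theorem exists_Icc_subset_of_step_up {P : ℕ → Prop} {a n : ℕ} (ha : a ∈ S)
    (hle : ∀ i ∈ S, i ≤ n) (hup : ∀ i ∈ S, i + 1 ∈ S ∨ P i) :
    ∃ j ≥ a, P j ∧ Set.Icc a j ⊆ S := by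
  classical
  have hexit : ∃ j, a ≤ j ∧ j + 1 ∉ S :=
    ⟨max a n, le_max_left a n, fun h => by have := hle _ h; omega⟩
  obtain ⟨haj, hj⟩ := Nat.find_spec hexit
  have hsub : Set.Icc a (Nat.find hexit) ⊆ S := by
    rintro m ⟨ham, hmj⟩
    induction m, ham using Nat.le_induction with
    | base => exact ha
    | succ k hak _ => exact by_contra fun h => Nat.find_min hexit (by omega) ⟨hak, h⟩
  exact ⟨_, haj, (hup _ (hsub ⟨haj, le_rfl⟩)).resolve_left hj, hsub⟩

theorem Icc_subset_of_steps {P Q : ℕ → Prop} {n : ℕ} (hS : S.Nonempty)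
    (hle : ∀ i ∈ S, i ≤ n) (hup : ∀ i ∈ S, i + 1 ∈ S ∨ P i)
    (hdown : ∀ i, i + 1 ∈ S → i ∈ S ∨ Q (i + 1)) (hQ : Q 0)
    (hminimal : ¬ ∃ i j : ℕ, i ≤ j ∧ j ≤ n ∧ j - i < n ∧ Q i ∧ P j) :
    Set.Icc 0 n ⊆ S := by
  obtain ⟨a, ha⟩ := hS
  obtain ⟨i, hia, hQi, hdown_run⟩ := exists_Icc_subset_of_step_down ha hQ hdown
  obtain ⟨j, haj, hPj, hup_run⟩ := exists_Icc_subset_of_step_up ha hle hup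
  have hjn : j ≤ n := hle j (hup_run ⟨haj, le_rfl⟩)
  obtain ⟨rfl, rfl⟩ : i = 0 ∧ j = n := by
    by_contra h
    exact hminimal ⟨i, j, hia.trans haj, hjn, by omega, hQi, hPj⟩
  rw [← Set.Icc_union_Icc_eq_Icc hia haj]
  exact Set.union_subset hdown_run hup_run

end Runs

section CommRing

variable {R : Type*} [CommRing R] (σ : R ≃+* R)

theorem pqInvariant_span_singleton_iff {p q c : R} :
    PQInvariant σ p q (Ideal.span {c}) ↔ c ∣ σ⁻¹ c * p ∧ c ∣ σ c * q := by
  refine ⟨fun h => ?_, fun ⟨hp, hq⟩ x hx => ?_⟩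
  · simpa only [Ideal.mem_span_singleton] using h c (Ideal.mem_span_singleton_self c)
  · obtain ⟨r, rfl⟩ := Ideal.mem_span_singleton.mp hx
    simp only [Ideal.mem_span_singleton, map_mul]
    constructor
    · simpa only [mul_right_comm] using hp.mul_right (σ⁻¹ r)
    · simpa only [mul_right_comm] using hq.mul_right (σ r)

def chainProd (z : R) (n : ℕ) : R :=
  ∏ i ∈ Finset.range (n + 1), (σ ^ i) z

theorem pow_succ_apply (i : ℕ) (x : R) : (σ ^ (i + 1)) x = σ ((σ ^ i) x) := by
  rw [pow_succ', RingAut.mul_apply]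

theorem pow_apply_dvd_chainProd (z : R) {i n : ℕ} (hi : i ≤ n) : (σ ^ i) z ∣ chainProd σ z n :=
  Finset.dvd_prod_of_mem _ (Finset.mem_range.mpr (Nat.lt_succ_of_le hi))

theorem not_isUnit_chainProd {z : R} (hz : ¬IsUnit z) (n : ℕ) : ¬IsUnit (chainProd σ z n) :=
  fun h => hz (isUnit_of_dvd_unit (pow_apply_dvd_chainProd σ z n.zero_le) h)

theorem map_chainProd_mul (z : R) (n : ℕ) :
    σ (chainProd σ z n) * z = chainProd σ z n * (σ ^ (n + 1)) z := by
  calc σ (chainProd σ z n) * z = ∏ i ∈ Finset.range (n + 2), (σ ^ i) z := by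
        simp only [Finset.prod_range_succ' _ (n + 1), chainProd, map_prod, pow_succ_apply, pow_zero,
          RingAut.one_apply]
    _ = chainProd σ z n * (σ ^ (n + 1)) z := Finset.prod_range_succ _ _

theorem symm_chainProd_mul (z : R) (n : ℕ) :
    σ⁻¹ (chainProd σ z n) * (σ ^ n) z = chainProd σ z n * σ⁻¹ z := by
  have := congrArg σ.symm (map_chainProd_mul σ z n)
  simpa only [map_mul, pow_succ_apply, RingAut.inv_apply, RingEquiv.symm_apply_apply] using this.symm

theorem pqInvariant_span_chainProd {p q z : R} {n : ℕ} (hzq : z ∣ q) (hzp : (σ ^ n) z ∣ p) :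
    PQInvariant σ p q (Ideal.span {chainProd σ z n}) := by
  obtain ⟨p', rfl⟩ := hzp
  obtain ⟨q', rfl⟩ := hzq
  rw [pqInvariant_span_singleton_iff]
  exact ⟨⟨σ⁻¹ z * p', by rw [← mul_assoc, symm_chainProd_mul, mul_assoc]⟩,
    ⟨(σ ^ (n + 1)) z * q', by rw [← mul_assoc, map_chainProd_mul, mul_assoc]⟩⟩

theorem eq_of_pow_apply_dvd_pow_apply {z : R} (hz : Irreducible z)
    (horb : ∀ m : ℕ, 1 ≤ m → ¬ Associated ((σ ^ m) z) z) {i j : ℕ}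
    (h : (σ ^ i) z ∣ (σ ^ j) z) : i = j := by
  have not_associated_of_lt : ∀ {i j : ℕ}, i < j → ¬ Associated ((σ ^ j) z) ((σ ^ i) z) := by
    intro i j hij hassoc
    obtain ⟨k, hk, rfl⟩ : ∃ k, 1 ≤ k ∧ j = i + k := ⟨j - i, by omega, by omega⟩
    have := hassoc.map (σ ^ i)⁻¹
    rw [pow_add, RingAut.mul_apply] at this
    simp only [RingAut.inv_apply, RingEquiv.symm_apply_apply] at this
    exact horb k hk this
  have hassoc := (hz.map (σ ^ i)).associated_of_dvd (hz.map (σ ^ j)) h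
  rcases lt_trichotomy i j with hij | hij | hij
  · exact absurd hassoc.symm (not_associated_of_lt hij)
  · exact hij
  · exact absurd hassoc (not_associated_of_lt hij)

end CommRing

section UniqueFactorization

variable {R : Type*} [CommRing R] [UniqueFactorizationMonoid R] (σ : R ≃+* R)

theorem le_of_pow_apply_dvd_chainProd {z : R} (hz : Irreducible z)
    (horb : ∀ m : ℕ, 1 ≤ m → ¬ Associated ((σ ^ m) z) z) {i n : ℕ}
    (h : (σ ^ i) z ∣ chainProd σ z n) : i ≤ n := by
  obtain ⟨j, hj, hdvd⟩ := (hz.map (σ ^ i)).prime.exists_mem_finset_dvd h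
  rw [eq_of_pow_apply_dvd_pow_apply σ hz horb hdvd]
  exact Nat.le_of_lt_succ (Finset.mem_range.mp hj)

theorem exists_pow_apply_dvd_of_dvd_chainProd [IsDomain R] {z d : R} (hz : Irreducible z) {n : ℕ}
    (hd : d ∣ chainProd σ z n) (hunit : ¬IsUnit d) : ∃ a, (σ ^ a) z ∣ d := by
  have hc : chainProd σ z n ≠ 0 :=
    Finset.prod_ne_zero_iff.mpr fun i _ => (hz.map (σ ^ i)).ne_zero
  obtain ⟨w, hw, hwd⟩ :=
    WfDvdMonoid.exists_irreducible_factor hunit (ne_zero_of_dvd_ne_zero hc hd)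
  obtain ⟨a, -, hwa⟩ := hw.prime.exists_mem_finset_dvd (hwd.trans hd)
  exact ⟨a, ((hw.associated_of_dvd (hz.map (σ ^ a)) hwa).symm.dvd).trans hwd⟩

theorem chainProd_dvd_of_forall_dvd {z d : R} (hz : Irreducible z)
    (horb : ∀ m : ℕ, 1 ≤ m → ¬ Associated ((σ ^ m) z) z) {n : ℕ}
    (h : ∀ i ≤ n, (σ ^ i) z ∣ d) : chainProd σ z n ∣ d :=
  Finset.prod_dvd_of_isRelPrime
    (fun i _ _ _ hij => (hz.map (σ ^ i)).isRelPrime_iff_not_dvd.mpr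
      fun hdvd => hij (eq_of_pow_apply_dvd_pow_apply σ hz horb hdvd))
    fun i hi => h i (Nat.le_of_lt_succ (Finset.mem_range.mp hi))

theorem chainProd_dvd_of_dvd_of_pqInvariant [IsDomain R] {p q z d : R} (hz : Irreducible z)
    (horb : ∀ m : ℕ, 1 ≤ m → ¬ Associated ((σ ^ m) z) z) (hzq : z ∣ q) {n : ℕ}
    (hminimal : ¬ ∃ i j : ℕ, i ≤ j ∧ j ≤ n ∧ j - i < n ∧ (σ ^ i) z ∣ q ∧ (σ ^ j) z ∣ p)
    (hdp : d ∣ σ⁻¹ d * p) (hdq : d ∣ σ d * q) (hd : d ∣ chainProd σ z n) (hunit : ¬IsUnit d) :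
    chainProd σ z n ∣ d := by
  set S : Set ℕ := {i | (σ ^ i) z ∣ d}
  have hprime : ∀ i, Prime ((σ ^ i) z) := fun i => (hz.map (σ ^ i)).prime
  have hle : ∀ i ∈ S, i ≤ n := fun i hi => le_of_pow_apply_dvd_chainProd σ hz horb (hi.trans hd)
  have hup : ∀ i ∈ S, i + 1 ∈ S ∨ (σ ^ i) z ∣ p := fun i hi =>
    ((hprime i).dvd_or_dvd (hi.trans hdp)).imp_left fun h => show (σ ^ (i + 1)) z ∣ d by
      simpa only [pow_succ_apply, RingAut.inv_apply, RingEquiv.apply_symm_apply] using map_dvd σ h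
  have hdown : ∀ i, i + 1 ∈ S → i ∈ S ∨ (σ ^ (i + 1)) z ∣ q := fun i hi =>
    ((hprime (i + 1)).dvd_or_dvd (hi.trans hdq)).imp_left fun h => show (σ ^ i) z ∣ d by
      simpa only [pow_succ_apply, RingAut.inv_apply, RingEquiv.symm_apply_apply]
        using map_dvd σ⁻¹ h
  have hS : S.Nonempty := exists_pow_apply_dvd_of_dvd_chainProd σ hz hd hunit
  exact chainProd_dvd_of_forall_dvd σ hz horb fun i hi =>
    Icc_subset_of_steps hS hle hup hdown
      (by simpa using hzq) hminimal ⟨i.zero_le, hi⟩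

end UniqueFactorization

theorem stmt_9_general {R : Type*} [CommRing R] [IsDomain R] [IsPrincipalIdealRing R]
    (σ : R ≃+* R)
    (horb : ∀ z : R, Irreducible z → ∀ m : ℕ, 1 ≤ m → ¬ Associated ((σ ^ m) z) z)
    (p q : R)
    (q₀ : R) (hq₀ : Irreducible q₀) (hq₀q : q₀ ∣ q)
    (n : ℕ) (hp₀ : (σ ^ n) q₀ ∣ p)
    (hminimal : ¬ ∃ i j : ℕ, i ≤ j ∧ j ≤ n ∧ j - i < n ∧ (σ ^ i) q₀ ∣ q ∧ (σ ^ j) q₀ ∣ p) :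
    Ideal.span {∏ i ∈ Finset.range (n + 1), (σ ^ i) q₀} ≠ (⊤ : Ideal R) ∧
      PQInvariant σ p q (Ideal.span {∏ i ∈ Finset.range (n + 1), (σ ^ i) q₀}) ∧
      ∀ I : Ideal R, PQInvariant σ p q I →
        Ideal.span {∏ i ∈ Finset.range (n + 1), (σ ^ i) q₀} < I → I = ⊤ := by
  refine ⟨fun h => not_isUnit_chainProd σ hq₀.not_isUnit n (Ideal.span_singleton_eq_top.mp h),
    pqInvariant_span_chainProd σ hq₀q hp₀, fun I hI hlt => ?_⟩
  obtain ⟨d, rfl⟩ := (IsPrincipalIdealRing.principal I).principal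
  rw [Ideal.submodule_span_eq] at hI hlt ⊢
  obtain ⟨hdp, hdq⟩ := (pqInvariant_span_singleton_iff σ).mp hI
  by_contra hne
  refine hlt.not_ge (Ideal.span_singleton_le_span_singleton.mpr ?_)
  exact chainProd_dvd_of_dvd_of_pqInvariant σ hq₀ (horb q₀ hq₀) hq₀q hminimal hdp hdq
    (Ideal.span_singleton_le_span_singleton.mp hlt.le) (hne ∘ Ideal.span_singleton_eq_top.mpr)

/-- Maximal basic submodules of `V_p` over a PID with infinite orbits:
under the minimality condition on the pair `(q₀, σ^n(q₀))`, the ideal generated by the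
chain product `∏_{i=0}^{n} σ^i(q₀)` is a maximal `(p,q)`-invariant ideal. -/
theorem stmt_9 {R : Type*} [CommRing R] [IsDomain R] [IsPrincipalIdealRing R]
    (σ : R ≃+* R)
    (horb : ∀ z : R, Irreducible z → ∀ m : ℕ, 1 ≤ m → ¬ Associated ((σ ^ m) z) z)
    (p q : R) (hp : p ≠ 0) (hq : q ≠ 0)
    (q₀ : R) (hq₀ : Irreducible q₀) (hq₀q : q₀ ∣ q)
    (n : ℕ) (hp₀ : (σ ^ n) q₀ ∣ p)
    (hminimal : ¬ ∃ i j : ℕ, i ≤ j ∧ j ≤ n ∧ j - i < n ∧ (σ ^ i) q₀ ∣ q ∧ (σ ^ j) q₀ ∣ p) :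
    Ideal.span {∏ i ∈ Finset.range (n + 1), (σ ^ i) q₀} ≠ (⊤ : Ideal R) ∧
      PQInvariant σ p q (Ideal.span {∏ i ∈ Finset.range (n + 1), (σ ^ i) q₀}) ∧
      ∀ I : Ideal R, PQInvariant σ p q I →
        Ideal.span {∏ i ∈ Finset.range (n + 1), (σ ^ i) q₀} < I → I = ⊤ :=
  stmt_9_general σ horb p q q₀ hq₀ hq₀q n hp₀ hminimal
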